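/- arXiv:0903.2617 — 6 statements merged into one kernel-verified Lean document; each statement's English description precedes it below -/
import Mathlib

section
/- von Staudt–Clausen theorem: for every even integer k > 0, the number W_k = B_k + \sum_{l \text{ prime}, (l-1) \mid k} 1/l is an integer. -/
theorem vonStaudt_Clausen_general (k : ℕ) (hk : Even k) :
    ∃ z : ℤ,
      bernoulli k +
        ∑ l ∈ (Finset.range (k + 2)).filter (fun l => l.Prime ∧ (l - 1) ∣ k),
          (1 : ℚ) / l = (z : ℚ) := by
  obtain ⟨m, rfl⟩ := hk
  rw [← two_mul]
  obtain ⟨z, hz⟩ := Bernoulli.vonStaudt_clausen m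
  exact ⟨z, hz.symm⟩

/-- von Staudt–Clausen: for every even `k > 0`,
`W_k = B_k + ∑_{l prime, (l-1) ∣ k} 1/l` is an integer.  (Every prime `l` with
`l - 1 ∣ k` satisfies `l ≤ k + 1`, so the sum over `Finset.range (k+2)` captures
all of them.) -/
theorem vonStaudt_Clausen (k : ℕ) (hk : Even k) (hk0 : 0 < k) :
    ∃ z : ℤ,
      bernoulli k +
        ∑ l ∈ (Finset.range (k + 2)).filter (fun l => l.Prime ∧ (l - 1) ∣ k),
          (1 : ℚ) / l = (z : ℚ) :=
  vonStaudt_Clausen_general k hk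
end

section
/- For every even integer k > 0 and every prime p, if p - 1 divides k then B_k + 1/p is a p-adic integer (lies in Z_{(p)}), and if p - 1 does not divide k then B_k is a p-adic integer. -/
/-!
Von Staudt–Clausen (`Bernoulli.vonStaudt_clausen`) says that `B_{2j} + ∑ 1/q`, summed over the
primes `q` with `q - 1 ∣ 2j`, is an integer. Every `1/q` with `q ≠ p` is a `p`-adic integer, so
`B_{2j}`, corrected by `1/p` exactly when `p - 1 ∣ 2j`, is one as well.
-/

open Finset

namespace Rat

variable {p : ℕ} [Fact p.Prime]

lemma mem_padicValuation_integer_iff {x : ℚ} :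
    x ∈ (padicValuation p).integer ↔ ¬ p ∣ x.den :=
  padicValuation_le_one_iff

lemma one_div_prime_mem_padicValuation_integer {q : ℕ} (hq : q.Prime) (hqp : q ≠ p) :
    (1 / q : ℚ) ∈ (padicValuation p).integer := by
  rw [mem_padicValuation_integer_iff, one_div, inv_natCast_den_of_pos hq.pos]
  exact fun h => hqp ((Nat.prime_dvd_prime_iff_eq Fact.out hq).1 h).symm

end Rat

namespace Bernoulli

variable {p : ℕ} [Fact p.Prime]

lemma mem_vonStaudtPrimes_iff {k : ℕ} (hk : 0 < k) :
    p ∈ (range (2 * k + 2)).filter (fun q => q.Prime ∧ (q - 1) ∣ 2 * k) ↔ (p - 1) ∣ 2 * k := by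
  simp only [mem_filter, mem_range, and_iff_right (Fact.out : p.Prime), and_iff_right_iff_imp]
  intro h
  have := Nat.le_of_dvd (by omega) h
  omega

lemma bernoulli_add_indicator_mem_padicValuation_integer {k : ℕ} (hk : 0 < k) :
    bernoulli (2 * k) + (if (p - 1) ∣ 2 * k then 1 / p else 0 : ℚ) ∈
      (Rat.padicValuation p).integer := by
  set S := (range (2 * k + 2)).filter (fun q => q.Prime ∧ (q - 1) ∣ 2 * k)
  obtain ⟨n, hn⟩ := vonStaudt_clausen k
  have hsplit : ∑ q ∈ S, (1 / q : ℚ) =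
      (if (p - 1) ∣ 2 * k then 1 / p else 0 : ℚ) + ∑ q ∈ S.erase p, (1 / q : ℚ) := by
    split_ifs with hdvd
    · exact (add_sum_erase S _ ((mem_vonStaudtPrimes_iff hk).2 hdvd)).symm
    · rw [erase_eq_of_notMem (mt (mem_vonStaudtPrimes_iff hk).1 hdvd), zero_add]
  have hrest : ∑ q ∈ S.erase p, (1 / q : ℚ) ∈ (Rat.padicValuation p).integer :=
    Subring.sum_mem _ fun q hq =>
      Rat.one_div_prime_mem_padicValuation_integer (mem_filter.1 (mem_of_mem_erase hq)).2.1
        (ne_of_mem_erase hq)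
  have hB : bernoulli (2 * k) + (if (p - 1) ∣ 2 * k then 1 / p else 0 : ℚ) =
      n - ∑ q ∈ S.erase p, (1 / q : ℚ) := by
    rw [hn, hsplit]; ring
  rw [hB]
  exact Subring.sub_mem _ (intCast_mem _ n) hrest

end Bernoulli

/-- For every even `k > 0` and every prime `p` : if `p - 1 ∣ k` then `B_k + 1/p`
is a `p`-adic integer (its denominator is prime to `p`), and otherwise `B_k`
itself is a `p`-adic integer. -/
theorem bernoulli_padic_integrality (k p : ℕ) (hk : Even k) (hk0 : 0 < k)
    (hp : p.Prime) :
    ((p - 1) ∣ k → ¬ p ∣ (bernoulli k + 1 / (p : ℚ)).den) ∧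
    (¬ (p - 1) ∣ k → ¬ p ∣ (bernoulli k).den) := by
  have : Fact p.Prime := ⟨hp⟩
  obtain ⟨j, rfl⟩ := hk
  rw [← two_mul] at hk0 ⊢
  have h := Bernoulli.bernoulli_add_indicator_mem_padicValuation_integer (p := p) (k := j)
    (by omega)
  refine ⟨fun hdvd => ?_, fun hdvd => ?_⟩ <;>
    simpa [hdvd, Rat.mem_padicValuation_integer_iff] using h
end

section
/- Let p be a prime, k > 0 an even integer, and s \ge 1. Then S_k(p^{s+1}) \equiv p \cdot S_k(p^s) \pmod{p^{s+1}}, where S_k(n) = \sum_{j=0}^{n-1} j^k. -/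
private lemma sum_range_mul_decomp {M : Type*} [AddCommMonoid M] (f : ℕ → M) (a b : ℕ) :
    ∑ j ∈ Finset.range (a * b), f j =
      ∑ i ∈ Finset.range a, ∑ r ∈ Finset.range b, f (i * b + r) := by
  induction a with
  | zero => simp
  | succ n ih =>
    rw [Nat.succ_mul, Finset.sum_range_add, ih, Finset.sum_range_succ]

private lemma pow_add_sq_zero {R : Type*} [CommRing R] (x t : R) (ht : t * t = 0) (k : ℕ) :
    (x + t) ^ k = x ^ k + (k : R) * x ^ (k - 1) * t := by
  induction k with
  | zero => simp
  | succ n ih =>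
    have hx : (n : R) * x ^ (n - 1) * x = (n : R) * x ^ n := by
      cases n with
      | zero => simp
      | succ m => rw [Nat.succ_sub_one, mul_assoc, ← pow_succ]
    calc (x + t) ^ (n + 1) = (x ^ n + (n : R) * x ^ (n - 1) * t) * (x + t) := by
          rw [pow_succ, ih]
      _ = x ^ (n + 1) + ((n : R) * x ^ (n - 1) * x) * t + x ^ n * t
            + (n : R) * x ^ (n - 1) * (t * t) := by ring
      _ = x ^ (n + 1) + ((n : R) + 1) * x ^ n * t := by rw [hx, ht]; ring
      _ = x ^ (n + 1) + ((n + 1 : ℕ) : R) * x ^ (n + 1 - 1) * t := by push_cast; ring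

/-- For a prime `p`, an even `k > 0` and `s ≥ 1`:
`S_k(p^{s+1}) ≡ p ⬝ S_k(p^s)  (mod p^{s+1})` where `S_k(n) = ∑_{j<n} j^k`. -/
theorem power_sum_congruence (p k s : ℕ) (hp : p.Prime) (hk : Even k)
    (hk0 : 0 < k) (hs : 1 ≤ s) :
    (∑ j ∈ Finset.range (p ^ (s + 1)), j ^ k) ≡
      p * ∑ j ∈ Finset.range (p ^ s), j ^ k [MOD p ^ (s + 1)] := by
  set N := p ^ (s + 1) with hN
  rw [← ZMod.natCast_eq_natCast_iff]
  push_cast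
  have hT2 : ((p : ZMod N) ^ s) * ((p : ZMod N) ^ s) = 0 := by
    rw [← pow_add, ← Nat.cast_pow, ZMod.natCast_eq_zero_iff]
    exact pow_dvd_pow p (by omega)
  have hdecomp : (∑ j ∈ Finset.range (p ^ (s + 1)), (j : ZMod N) ^ k) =
      ∑ i ∈ Finset.range p, ∑ r ∈ Finset.range (p ^ s), ((i * p ^ s + r : ℕ) : ZMod N) ^ k := by
    rw [pow_succ, mul_comm (p ^ s) p, sum_range_mul_decomp]
  rw [hdecomp]
  have hterm : ∀ i ∈ Finset.range p, ∀ r ∈ Finset.range (p ^ s),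
      ((i * p ^ s + r : ℕ) : ZMod N) ^ k =
        (r : ZMod N) ^ k + (k : ZMod N) * (r : ZMod N) ^ (k - 1) * ((i : ZMod N) * (p : ZMod N) ^ s) := by
    intro i _ r _
    have h0 : ((i : ZMod N) * (p : ZMod N) ^ s) * ((i : ZMod N) * (p : ZMod N) ^ s) = 0 := by
      rw [mul_mul_mul_comm, hT2, mul_zero]
    push_cast
    rw [add_comm ((i : ZMod N) * _), pow_add_sq_zero _ _ h0]
  rw [Finset.sum_congr rfl fun i hi => Finset.sum_congr rfl (hterm i hi)]
  simp only [Finset.sum_add_distrib]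
  have hkill : (∑ i ∈ Finset.range p, ∑ r ∈ Finset.range (p ^ s),
      (k : ZMod N) * (r : ZMod N) ^ (k - 1) * ((i : ZMod N) * (p : ZMod N) ^ s)) = 0 := by
    have hrw : (∑ i ∈ Finset.range p, ∑ r ∈ Finset.range (p ^ s),
        (k : ZMod N) * (r : ZMod N) ^ (k - 1) * ((i : ZMod N) * (p : ZMod N) ^ s)) =
        (∑ r ∈ Finset.range (p ^ s), (r : ZMod N) ^ (k - 1)) *
          ((k * (∑ i ∈ Finset.range p, i) * p ^ s : ℕ) : ZMod N) := by
      push_cast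
      rw [Finset.sum_comm]
      rw [Finset.sum_mul]
      refine Finset.sum_congr rfl fun r _ => ?_
      simp only [Finset.mul_sum, Finset.sum_mul]
      exact Finset.sum_congr rfl fun i _ => by ring
    rw [hrw]
    have hdvd : N ∣ k * (∑ i ∈ Finset.range p, i) * p ^ s := by
      rw [Finset.sum_range_id]
      have hpdvd : p ∣ k * (p * (p - 1) / 2) := by
        rcases eq_or_ne p 2 with h2 | h2
        · subst h2
          exact Dvd.dvd.mul_right hk.two_dvd _
        · have hodd : Odd p := hp.odd_of_ne_two h2
          have h2d : 2 ∣ p - 1 := by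
            obtain ⟨m, hm⟩ := hodd
            omega
          have : p * (p - 1) / 2 = p * ((p - 1) / 2) := Nat.mul_div_assoc p h2d
          rw [this]
          exact Dvd.dvd.mul_left ⟨(p - 1) / 2, rfl⟩ k
      calc N = p ^ s * p := by rw [hN, pow_succ]
        _ ∣ (k * (p * (p - 1) / 2)) * p ^ s := by
            rcases hpdvd with ⟨c, hc⟩
            exact ⟨c, by rw [hc]; ring⟩
        _ = k * (p * (p - 1) / 2) * p ^ s := rfl
    rw [(ZMod.natCast_eq_zero_iff _ _).mpr hdvd, mul_zero]
  rw [hkill, add_zero, Finset.sum_const, Finset.card_range]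
  simp [nsmul_eq_mul]
end

section
/- Let p be a prime and k > 0 an even integer. Then for any two integers r, s > 0, the rational number S_k(p^r)/p^r - S_k(p^s)/p^s lies in Z_{(p)}. -/
/-!
Write `S_k(n) = ∑_{j<n} j^k`. Splitting `j < p n` as `j = x n + y` with `x < p`, `y < n` and
expanding `(x n + y)^k` binomially gives `S_k(p n) = ∑_m (k choose m) n^m S_m(p) S_{k-m}(n)`.
When `p ∣ n`, every term with `m ≥ 2` is divisible by `p n`; the `m = 1` term is
`(k S_1(p)) n S_{k-1}(n)`, and `k S_1(p) = (k/2) p (p-1)` is divisible by `p` because `k` is even;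
the `m = 0` term is `p S_k(n)`. Hence `S_k(p n)/(p n) - S_k(n)/n` is an integer, and taking
`n = p, p^2, …` all the quotients `S_k(p^r)/p^r` with `r ≥ 1` are congruent modulo `1`.
-/

open Finset

def powerSum (k n : ℕ) : ℤ := ∑ j ∈ range n, (j : ℤ) ^ k

theorem sum_range_mul {M : Type*} [AddCommMonoid M] (f : ℕ → M) (a b : ℕ) :
    ∑ j ∈ range (a * b), f j = ∑ x ∈ range a, ∑ y ∈ range b, f (x * b + y) := by
  induction a with
  | zero => simp
  | succ a ih => rw [Nat.succ_mul, sum_range_add, ih, sum_range_succ]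

theorem powerSum_mul (k a b : ℕ) :
    powerSum k (a * b) =
      ∑ m ∈ range (k + 1), k.choose m * b ^ m * powerSum m a * powerSum (k - m) b := by
  simp only [powerSum, sum_range_mul, mul_sum, sum_mul, Nat.cast_add, Nat.cast_mul, add_pow]
  rw [sum_congr rfl fun x _ => sum_comm, sum_comm]
  refine sum_congr rfl fun m _ => ?_
  rw [sum_comm]
  refine sum_congr rfl fun y _ => sum_congr rfl fun x _ => ?_
  ring

theorem two_mul_powerSum_one (n : ℕ) : 2 * powerSum 1 n = n * (n - 1 : ℤ) := by
  induction n with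
  | zero => simp [powerSum]
  | succ n ih =>
    simp only [powerSum, sum_range_succ] at ih ⊢
    push_cast
    linear_combination ih

theorem powerSum_zero (n : ℕ) : powerSum 0 n = n := by simp [powerSum]

theorem dvd_mul_powerSum_one {k : ℕ} (hk : Even k) (p : ℕ) : (p : ℤ) ∣ k * powerSum 1 p := by
  obtain ⟨t, rfl⟩ := hk
  exact ⟨t * (p - 1), by push_cast; linear_combination t * two_mul_powerSum_one p⟩

theorem mul_dvd_powerSum_mul_sub {k p n : ℕ} (hk : Even k) (hpn : p ∣ n) :
    (p * n : ℤ) ∣ powerSum k (p * n) - p * powerSum k n := by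
  rw [powerSum_mul, sum_range_succ']
  simp only [Nat.choose_zero_right, pow_zero, powerSum_zero, Nat.sub_zero, Nat.cast_one, one_mul,
    add_sub_cancel_right]
  refine dvd_sum fun m _ => ?_
  rcases m with _ | m
  · have h := mul_dvd_mul (dvd_mul_powerSum_one hk p) (dvd_refl (n : ℤ))
    simpa [mul_comm, mul_left_comm, mul_assoc] using h.mul_right (powerSum (k - 1) n)
  · have h : (p * n : ℤ) ∣ (n : ℤ) ^ (m + 1 + 1) :=
        pow_succ (n : ℤ) (m + 1) ▸
          mul_dvd_mul (dvd_pow (Int.natCast_dvd_natCast.2 hpn) m.succ_ne_zero) dvd_rfl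
    exact ((h.mul_left _).mul_right _).mul_right _

open AddCommGroup

theorem powerSum_div_modEq_powerSum_mul_div {k p n : ℕ} (hk : Even k) (hpn : p ∣ n)
    (hn : n ≠ 0) :
    (powerSum k n : ℚ) / n ≡ powerSum k (p * n) / (p * n) [PMOD 1] := by
  have hp : (p : ℚ) ≠ 0 := Nat.cast_ne_zero.2 (ne_zero_of_dvd_ne_zero hn hpn)
  obtain ⟨z, hz⟩ := mul_dvd_powerSum_mul_sub hk hpn
  refine modEq_iff_zsmul'.2 ⟨z, ?_⟩
  have hz' : (powerSum k (p * n) : ℚ) - p * powerSum k n = p * n * z := by exact_mod_cast hz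
  field_simp
  linear_combination hz'

theorem powerSum_div_modEq_powerSum_pow_div {k p r : ℕ} (hk : Even k) (hp : p ≠ 0) (hr : 0 < r) :
    (powerSum k p : ℚ) / p ≡ powerSum k (p ^ r) / (p : ℚ) ^ r [PMOD 1] := by
  induction r, hr using Nat.le_induction with
  | base => simp
  | succ r hr ih =>
    refine ih.trans ?_
    simpa [pow_succ'] using powerSum_div_modEq_powerSum_mul_div hk
      (dvd_pow_self p (Nat.one_le_iff_ne_zero.1 hr)) (pow_ne_zero r hp)

theorem power_sum_quotient_padic_integral_general (p k r s : ℕ) (hp : p.Prime)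
    (hk : Even k) (hr : 0 < r) (hs : 0 < s) :
    ¬ p ∣ ((∑ j ∈ Finset.range (p ^ r), (j : ℚ) ^ k) / (p : ℚ) ^ r -
            (∑ j ∈ Finset.range (p ^ s), (j : ℚ) ^ k) / (p : ℚ) ^ s).den := by
  have hcast (n : ℕ) : ∑ j ∈ range n, (j : ℚ) ^ k = powerSum k n := by simp [powerSum]
  obtain ⟨z, hz⟩ := modEq_iff_zsmul'.1 <|
    (powerSum_div_modEq_powerSum_pow_div hk hp.ne_zero hs).symm.trans
      (powerSum_div_modEq_powerSum_pow_div hk hp.ne_zero hr)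
  rw [hcast, hcast, hz, zsmul_one, Rat.den_intCast, Nat.dvd_one]
  exact hp.ne_one

/-- For a prime `p` and even `k > 0`, for all `r, s > 0` the rational number
`S_k(p^r)/p^r - S_k(p^s)/p^s` lies in `ℤ_{(p)}` (its denominator is prime
to `p`). -/
theorem power_sum_quotient_padic_integral (p k r s : ℕ) (hp : p.Prime)
    (hk : Even k) (hk0 : 0 < k) (hr : 0 < r) (hs : 0 < s) :
    ¬ p ∣ ((∑ j ∈ Finset.range (p ^ r), (j : ℚ) ^ k) / (p : ℚ) ^ r -
            (∑ j ∈ Finset.range (p ^ s), (j : ℚ) ^ k) / (p : ℚ) ^ s).den :=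
  power_sum_quotient_padic_integral_general p k r s hp hk hr hs
end

section
/- Let p be a prime and k > 0 an even integer. Then in the p-adic numbers, \lim_{s \to \infty} S_k(p^s)/p^s = B_k. -/
/-!
By Faulhaber's formula, `S_k(n) / n` is a polynomial in `n` whose constant term is `B_k`.
Since `p ^ s → 0` in `ℚ_p`, continuity of this polynomial gives `S_k(p ^ s) / p ^ s → B_k`.
-/

open Finset Filter Topology

/-- The coefficient of `n ^ (k + 1 - i)` in Faulhaber's formula for `∑ j < n, j ^ k`. -/
def faulhaberCoeff (k i : ℕ) : ℚ :=
  bernoulli i * (k + 1).choose i / (k + 1)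

theorem faulhaberCoeff_self (k : ℕ) : faulhaberCoeff k k = bernoulli k := by
  rw [faulhaberCoeff, Nat.choose_succ_self_right]
  push_cast
  field_simp

theorem sum_faulhaberCoeff_mul_zero_pow {K : Type*} [DivisionRing K] (k : ℕ) :
    ∑ i ∈ range (k + 1), (faulhaberCoeff k i : K) * (0 : K) ^ (k - i) = bernoulli k := by
  rw [sum_range_succ, Nat.sub_self, pow_zero, mul_one, faulhaberCoeff_self]
  refine add_eq_right.mpr (sum_eq_zero fun i hi => ?_)
  rw [zero_pow (by grind), mul_zero]

section

variable {K : Type*} [Field K] [CharZero K]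

theorem sum_range_pow_div_eq (k : ℕ) {n : ℕ} (hn : n ≠ 0) :
    (∑ j ∈ range n, (j : K) ^ k) / n =
      ∑ i ∈ range (k + 1), (faulhaberCoeff k i : K) * (n : K) ^ (k - i) := by
  have hsum := congrArg (Rat.cast : ℚ → K) (sum_range_pow n k)
  push_cast at hsum
  rw [hsum, sum_div]
  refine sum_congr rfl fun i hi => ?_
  have hki : k + 1 - i = k - i + 1 := by grind
  rw [faulhaberCoeff, hki, pow_succ]
  push_cast
  field_simp

theorem tendsto_sum_range_pow_div_bernoulli [TopologicalSpace K] [IsTopologicalRing K]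
    {ι : Type*} {l : Filter ι} {n : ι → ℕ} (hn : ∀ᶠ s in l, n s ≠ 0)
    (hn0 : Tendsto (fun s => (n s : K)) l (𝓝 0)) (k : ℕ) :
    Tendsto (fun s => (∑ j ∈ range (n s), (j : K) ^ k) / n s) l (𝓝 (bernoulli k : K)) := by
  have hpoly : Continuous fun x : K =>
      ∑ i ∈ range (k + 1), (faulhaberCoeff k i : K) * x ^ (k - i) := by
    fun_prop
  have hlim := (hpoly.tendsto 0).comp hn0
  rw [sum_faulhaberCoeff_mul_zero_pow] at hlim
  exact hlim.congr' (hn.mono fun s hs => (sum_range_pow_div_eq k hs).symm)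

end

theorem power_sum_tendsto_bernoulli_general (p : ℕ) [Fact p.Prime] (k : ℕ) :
    Filter.Tendsto
      (fun s : ℕ =>
        (∑ j ∈ Finset.range (p ^ s), (j : ℚ_[p]) ^ k) / (p : ℚ_[p]) ^ s)
      Filter.atTop (nhds ((bernoulli k : ℚ) : ℚ_[p])) := by
  have hp_pow : Tendsto (fun s : ℕ => ((p ^ s : ℕ) : ℚ_[p])) atTop (𝓝 0) := by
    simpa only [Nat.cast_pow] using tendsto_pow_atTop_nhds_zero_of_norm_lt_one Padic.norm_p_lt_one
  have hp_ne : ∀ᶠ s : ℕ in atTop, p ^ s ≠ 0 :=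
    Eventually.of_forall fun s => pow_ne_zero s (Fact.out : p.Prime).ne_zero
  simpa only [Nat.cast_pow] using tendsto_sum_range_pow_div_bernoulli hp_ne hp_pow k

/-- For a prime `p` and even `k > 0`, in `ℚ_p` we have
`lim_{s → ∞} S_k(p^s)/p^s = B_k`. -/
theorem power_sum_tendsto_bernoulli (p : ℕ) [Fact p.Prime] (k : ℕ)
    (hk : Even k) (hk0 : 0 < k) :
    Filter.Tendsto
      (fun s : ℕ =>
        (∑ j ∈ Finset.range (p ^ s), (j : ℚ_[p]) ^ k) / (p : ℚ_[p]) ^ s)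
      Filter.atTop (nhds ((bernoulli k : ℚ) : ℚ_[p])) :=
  power_sum_tendsto_bernoulli_general p k
end

section
/- Let p be a prime and k an even integer > 0. Then B_k - S_k(p)/p lies in Z_{(p)}. -/
/-!
By von Staudt–Clausen, `B_k + ∑ 1/q` is an integer, the sum running over the primes `q` with
`q - 1 ∣ k`; all terms with `q ≠ p` are `p`-integral, so `B_k ≡ -[p - 1 ∣ k] / p` modulo `ℤ_(p)`.
On the other side, the `k`-th power sum over `𝔽_p` is `-1` or `0` according as `p - 1 ∣ k`, so
`S_k(p) ≡ -[p - 1 ∣ k] (mod p)`, and the two correction terms cancel in `B_k - S_k(p) / p`.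
-/

open Finset

theorem ZMod.sum_range_natCast {n : ℕ} [NeZero n] {M : Type*} [AddCommMonoid M]
    (f : ZMod n → M) : ∑ j ∈ range n, f j = ∑ x, f x :=
  sum_nbij' Nat.cast ZMod.val (by simp) (by simp [ZMod.val_lt])
    (by simp +contextual [Nat.mod_eq_of_lt]) (by simp) (by simp)

theorem FiniteField.sum_pow_of_ne_zero {K : Type*} [Field K] [Fintype K] {i : ℕ} (hi : i ≠ 0) :
    ∑ x : K, x ^ i = if Fintype.card K - 1 ∣ i then -1 else 0 := by
  classical
  rw [← sum_pow_units, ← Fintype.sum_subtype_add_sum_subtype (· ≠ 0),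
    Fintype.sum_equiv unitsEquivNeZero (fun u : Kˣ ↦ (u : K) ^ i)
      (fun x : {a : K // a ≠ 0} ↦ (x : K) ^ i) (fun _ ↦ rfl), add_eq_left]
  exact Fintype.sum_eq_zero _ fun x ↦ by rw [not_not.mp x.2, zero_pow hi]

theorem natCast_dvd_sum_range_pow_add_ite {p : ℕ} [Fact p.Prime] {k : ℕ} (hk : k ≠ 0) :
    (p : ℤ) ∣ ∑ j ∈ range p, (j : ℤ) ^ k + if p - 1 ∣ k then 1 else 0 := by
  rw [← ZMod.intCast_zmod_eq_zero_iff_dvd]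
  push_cast
  rw [ZMod.sum_range_natCast (· ^ k), FiniteField.sum_pow_of_ne_zero hk, ZMod.card]
  split_ifs <;> simp

theorem Rat.one_div_natCast_mem_padicValuation_integer {p q : ℕ} [Fact p.Prime] (hq : q.Prime)
    (hqp : q ≠ p) : (1 / q : ℚ) ∈ (Rat.padicValuation p).integer := by
  rw [Valuation.mem_integer_iff, Rat.padicValuation_le_one_iff,
    show ((1 : ℚ) / q).den = q by simp [hq.ne_zero]]
  exact fun h ↦ hqp ((Nat.prime_dvd_prime_iff_eq Fact.out hq).1 h).symm

theorem Rat.sum_one_div_sub_mem_padicValuation_integer {p : ℕ} [Fact p.Prime] {s : Finset ℕ}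
    (hs : ∀ q ∈ s, q.Prime) :
    ∑ q ∈ s, (1 / q : ℚ) - (if p ∈ s then 1 else 0) / p ∈ (Rat.padicValuation p).integer := by
  have herase : ∑ q ∈ s, (1 / q : ℚ) - (if p ∈ s then 1 else 0) / p =
      ∑ q ∈ s.erase p, (1 / q : ℚ) := by
    split_ifs with hp
    · rw [sum_erase_eq_sub hp]
    · rw [erase_eq_of_notMem hp, zero_div, sub_zero]
  rw [herase]
  exact Subring.sum_mem _ fun q hq ↦ one_div_natCast_mem_padicValuation_integer
    (hs q (mem_of_mem_erase hq)) (ne_of_mem_erase hq)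

theorem Nat.Prime.mem_filter_prime_sub_one_dvd_iff {p n : ℕ} (hp : p.Prime) (hn : n ≠ 0) :
    p ∈ (range (n + 2)).filter (fun q ↦ q.Prime ∧ q - 1 ∣ n) ↔ p - 1 ∣ n := by
  simp only [mem_filter, mem_range, hp, true_and, and_iff_right_iff_imp]
  intro h
  have := Nat.le_of_dvd (Nat.pos_of_ne_zero hn) h
  omega

/-- For a prime `p` and even `k > 0`, `B_k - S_k(p)/p` lies in `ℤ_{(p)}`
(its denominator is prime to `p`). -/
theorem bernoulli_sub_power_sum_padic_integral (p k : ℕ) (hp : p.Prime)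
    (hk : Even k) (hk0 : 0 < k) :
    ¬ p ∣ (bernoulli k -
            (∑ j ∈ Finset.range p, (j : ℚ) ^ k) / (p : ℚ)).den := by
  have := Fact.mk hp
  obtain ⟨m, rfl⟩ := hk
  rw [← two_mul] at hk0 ⊢
  obtain ⟨N, hN⟩ := Bernoulli.vonStaudt_clausen m
  obtain ⟨T, hdvd⟩ := natCast_dvd_sum_range_pow_add_ite (p := p) hk0.ne'
  have hS : ∑ j ∈ range p, (j : ℚ) ^ (2 * m) + (if p - 1 ∣ 2 * m then 1 else 0) = p * T := by
    exact_mod_cast hdvd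
  set F := (range (2 * m + 2)).filter fun q ↦ q.Prime ∧ q - 1 ∣ 2 * m
  have hF := Rat.sum_one_div_sub_mem_padicValuation_integer (p := p) (s := F)
    fun q hq ↦ (mem_filter.1 hq).2.1
  simp only [show p ∈ F ↔ p - 1 ∣ 2 * m from hp.mem_filter_prime_sub_one_dvd_iff hk0.ne'] at hF
  set e : ℚ := if p - 1 ∣ 2 * m then 1 else 0
  have hsplit : bernoulli (2 * m) - (∑ j ∈ range p, (j : ℚ) ^ (2 * m)) / p =
      N - T - (∑ q ∈ F, (1 / q : ℚ) - e / p) := by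
    rw [eq_sub_of_add_eq hS, sub_div, mul_div_cancel_left₀ _ (by exact_mod_cast hp.ne_zero)]
    linear_combination -hN
  rw [← Rat.padicValuation_le_one_iff, ← Valuation.mem_integer_iff, hsplit]
  exact sub_mem (sub_mem (intCast_mem _ N) (intCast_mem _ T)) hF
end
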